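/- arXiv:1705.03549 — 2 statements merged into one kernel-verified Lean document; each statement's English description precedes it below -/
import Mathlib

section
/- Let θ̂ preserve the sublinear expectation E and be ergodic. If ξ : Ω → ℝ is measurable and ξ(θ̂ω) = ξ(ω) quasi-surely, then ξ is constant quasi-surely. -/
open Set
open scoped symmDiff

/-- A property holds quasi-surely if it holds outside a set of zero capacity. -/
def QuasiSurely {Ω : Type*} (E : (Ω → ℝ) → ℝ) (p : Ω → Prop) : Prop :=
  ∃ A : Set Ω, E (A.indicator fun _ => (1 : ℝ)) = 0 ∧ ∀ ω ∉ A, p ω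

/-- If `θ̂` preserves `E` and is ergodic (in the equivalent formulation:
any `B` with `E[1_{θ̂⁻¹B Δ B}] = 0` has `E[1_B] = 0` or `E[1_{Bᶜ}] = 0`), then every
measurable `ξ` with `ξ ∘ θ̂ = ξ` quasi-surely is constant quasi-surely. -/
theorem ergodic_implies_invariant_constant {Ω : Type*} [MeasurableSpace Ω]
    (E : (Ω → ℝ) → ℝ)
    (hmono : ∀ X Y : Ω → ℝ, (∀ ω, Y ω ≤ X ω) → E Y ≤ E X)
    (hconst : ∀ c : ℝ, E (fun _ => c) = c)
    (hsub : ∀ X Y : Ω → ℝ, E (X + Y) ≤ E X + E Y)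
    (hpos : ∀ (l : ℝ) (X : Ω → ℝ), 0 ≤ l → E (fun ω => l * X ω) = l * E X)
    (θ : Ω → Ω) (hθ : Measurable θ)
    (hpres : ∀ X : Ω → ℝ, E (X ∘ θ) = E X)
    (hergodic : ∀ B : Set Ω, MeasurableSet B →
      E ((((θ ⁻¹' B) ∆ B)).indicator fun _ => (1 : ℝ)) = 0 →
      E (B.indicator fun _ => (1 : ℝ)) = 0 ∨ E (Bᶜ.indicator fun _ => (1 : ℝ)) = 0)
    (ξ : Ω → ℝ) (hξ : Measurable ξ)
    (hinv : QuasiSurely E (fun ω => ξ (θ ω) = ξ ω)) :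
    ∃ c : ℝ, QuasiSurely E (fun ω => ξ ω = c) := by
  classical
  obtain ⟨A₀, hA₀, hA₀inv⟩ := hinv
  -- basic properties of B ↦ E[1_B]
  have Inonneg : ∀ B : Set Ω, 0 ≤ E (B.indicator fun _ => (1 : ℝ)) := by
    intro B
    have h := hmono (B.indicator fun _ => (1 : ℝ)) (fun _ => 0)
      (fun ω => Set.indicator_nonneg (fun _ _ => zero_le_one) ω)
    rwa [hconst 0] at h
  have Imono : ∀ B C : Set Ω, B ⊆ C →
      E (B.indicator fun _ => (1 : ℝ)) ≤ E (C.indicator fun _ => (1 : ℝ)) := by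
    intro B C hBC
    refine hmono _ _ (fun ω => ?_)
    by_cases hB : ω ∈ B
    · simp [Set.indicator_of_mem hB, Set.indicator_of_mem (hBC hB)]
    · simp only [Set.indicator_of_notMem hB]
      exact Set.indicator_nonneg (fun _ _ => zero_le_one) ω
  have Inull : ∀ B : Set Ω, B ⊆ A₀ → E (B.indicator fun _ => (1 : ℝ)) = 0 :=
    fun B h => le_antisymm (by rw [← hA₀]; exact Imono _ _ h) (Inonneg B)
  have Isum : ∀ B : Set Ω,
      (1 : ℝ) ≤ E (B.indicator fun _ => (1 : ℝ)) + E (Bᶜ.indicator fun _ => (1 : ℝ)) := by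
    intro B
    have heq : (fun _ : Ω => (1 : ℝ)) =
        (B.indicator fun _ => (1 : ℝ)) + (Bᶜ.indicator fun _ => (1 : ℝ)) := by
      funext ω
      by_cases hB : ω ∈ B <;> simp [Set.indicator_apply, hB]
    calc (1 : ℝ) = E (fun _ => 1) := (hconst 1).symm
      _ = E ((B.indicator fun _ => (1 : ℝ)) + (Bᶜ.indicator fun _ => (1 : ℝ))) := by rw [← heq]
      _ ≤ _ := hsub _ _
  have Iunion : ∀ B C : Set Ω,
      E ((B ∪ C).indicator fun _ => (1 : ℝ)) ≤
        E (B.indicator fun _ => (1 : ℝ)) + E (C.indicator fun _ => (1 : ℝ)) := by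
    intro B C
    have h1 : E ((B ∪ C).indicator fun _ => (1 : ℝ)) ≤
        E ((B.indicator fun _ => (1 : ℝ)) + (C.indicator fun _ => (1 : ℝ))) := by
      refine hmono _ _ (fun ω => ?_)
      by_cases hB : ω ∈ B <;> by_cases hC : ω ∈ C <;>
        simp [Set.indicator_apply, hB, hC, Pi.add_apply]
    exact h1.trans (hsub _ _)
  -- lower bound from complement being null
  have Ige : ∀ B : Set Ω, E (Bᶜ.indicator fun _ => (1 : ℝ)) = 0 →
      (1 : ℝ) ≤ E (B.indicator fun _ => (1 : ℝ)) := by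
    intro B h
    have := Isum B
    linarith
  -- dichotomy for invariant-modulo-null sets
  have dich : ∀ B : Set Ω, MeasurableSet B → ((θ ⁻¹' B) ∆ B ⊆ A₀) →
      E (B.indicator fun _ => (1 : ℝ)) = 0 ∨ E (Bᶜ.indicator fun _ => (1 : ℝ)) = 0 := by
    intro B hBm hBsub
    exact hergodic B hBm (Inull _ hBsub)
  have symmsub : ∀ B : Set Ω, (∀ ω, (ω ∈ B ↔ θ ω ∈ B) ∨ ξ (θ ω) ≠ ξ ω) →
      (θ ⁻¹' B) ∆ B ⊆ A₀ := by
    intro B hB ω hω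
    by_contra hωA
    have hinvω : ξ (θ ω) = ξ ω := hA₀inv ω hωA
    rcases Set.mem_symmDiff.mp hω with ⟨h1, h2⟩ | ⟨h1, h2⟩
    · rcases hB ω with h | h
      · exact h2 (h.mpr h1)
      · exact h hinvω
    · rcases hB ω with h | h
      · exact h2 (h.mp h1)
      · exact h hinvω
  have dichGT : ∀ α : ℝ, E ((({ω | α < ξ ω}) : Set Ω).indicator fun _ => (1 : ℝ)) = 0 ∨
      E ((({ω | ξ ω ≤ α}) : Set Ω).indicator fun _ => (1 : ℝ)) = 0 := by
    intro α
    have hcompl : ({ω | α < ξ ω} : Set Ω)ᶜ = {ω | ξ ω ≤ α} := by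
      ext ω; simp [not_lt]
    have h := dich {ω | α < ξ ω} (measurableSet_lt measurable_const hξ) ?_
    · rwa [hcompl] at h
    · refine symmsub _ (fun ω => ?_)
      by_cases h : ξ (θ ω) = ξ ω
      · left; simp only [Set.mem_setOf_eq, h]
      · right; exact h
  have dichGE : ∀ α : ℝ, E ((({ω | α ≤ ξ ω}) : Set Ω).indicator fun _ => (1 : ℝ)) = 0 ∨
      E ((({ω | ξ ω < α}) : Set Ω).indicator fun _ => (1 : ℝ)) = 0 := by
    intro α
    have hcompl : ({ω | α ≤ ξ ω} : Set Ω)ᶜ = {ω | ξ ω < α} := by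
      ext ω; simp [not_le]
    have h := dich {ω | α ≤ ξ ω} (measurableSet_le measurable_const hξ) ?_
    · rwa [hcompl] at h
    · refine symmsub _ (fun ω => ?_)
      by_cases h : ξ (θ ω) = ξ ω
      · left; simp only [Set.mem_setOf_eq, h]
      · right; exact h
  -- the threshold set
  set T : Set ℝ := {α | E ((({ω | α < ξ ω}) : Set Ω).indicator fun _ => (1 : ℝ)) = 0} with hT
  have Tmono : ∀ α β : ℝ, α ∈ T → α ≤ β → β ∈ T := by
    intro α β hα hαβ
    have hsubset : ({ω | β < ξ ω} : Set Ω) ⊆ {ω | α < ξ ω} :=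
      fun ω h => lt_of_le_of_lt hαβ h
    exact le_antisymm (hα ▸ Imono _ _ hsubset) (Inonneg _)
  -- T is nonempty
  have Tne : T.Nonempty := by
    by_contra hTe
    have hle0 : ∀ α : ℝ, E ((({ω | ξ ω ≤ α}) : Set Ω).indicator fun _ => (1 : ℝ)) = 0 := by
      intro α
      rcases dichGT α with h | h
      · exact absurd (Set.nonempty_of_mem (show α ∈ T from h)) hTe
      · exact h
    set X : Ω → ℝ := fun ω => max (ξ ω) 0 with hX
    set k : ℝ := |E X| + 1 with hk
    have hk0 : (0 : ℝ) ≤ k := by positivity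
    have hptw : ∀ ω, k * (({ω | k < ξ ω} : Set Ω).indicator (fun _ => (1 : ℝ)) ω) ≤ X ω := by
      intro ω
      by_cases h : ω ∈ ({ω | k < ξ ω} : Set Ω)
      · rw [Set.indicator_of_mem h]
        simp only [Set.mem_setOf_eq] at h
        simp only [hX, mul_one]
        exact le_max_of_le_left h.le
      · rw [Set.indicator_of_notMem h, mul_zero]
        exact le_max_right _ _
    have h1 : k * E (({ω | k < ξ ω} : Set Ω).indicator fun _ => (1 : ℝ)) ≤ E X := by
      rw [← hpos k _ hk0]
      exact hmono _ _ hptw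
    have h2 : (1 : ℝ) ≤ E (({ω | k < ξ ω} : Set Ω).indicator fun _ => (1 : ℝ)) := by
      refine Ige _ ?_
      have : ({ω | k < ξ ω} : Set Ω)ᶜ = {ω | ξ ω ≤ k} := by ext ω; simp [not_lt]
      rw [this]; exact hle0 k
    have : k ≤ E X := le_trans (by nlinarith) h1
    have hEX : E X ≤ |E X| := le_abs_self _
    linarith [hk ▸ this]
  -- T has a lower bound
  have Tbdd : BddBelow T := by
    by_contra hTb
    have hall : ∀ α : ℝ, α ∈ T := by
      intro α
      rw [not_bddBelow_iff] at hTb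
      obtain ⟨t, htT, htα⟩ := hTb α
      exact Tmono t α htT htα.le
    have hge1 : ∀ α : ℝ, (1 : ℝ) ≤ E ((({ω | ξ ω ≤ α}) : Set Ω).indicator fun _ => (1 : ℝ)) := by
      intro α
      have hc : ({ω | ξ ω ≤ α} : Set Ω)ᶜ = {ω | α < ξ ω} := by ext ω; simp [not_le]
      refine Ige _ ?_
      rw [hc]; exact hall α
    set X : Ω → ℝ := fun ω => max (-ξ ω) 0 with hX
    set k : ℝ := |E X| + 1 with hk
    have hk0 : (0 : ℝ) ≤ k := by positivity
    have hptw : ∀ ω, k * (({ω | ξ ω ≤ -k} : Set Ω).indicator (fun _ => (1 : ℝ)) ω) ≤ X ω := by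
      intro ω
      by_cases h : ω ∈ ({ω | ξ ω ≤ -k} : Set Ω)
      · rw [Set.indicator_of_mem h]
        simp only [Set.mem_setOf_eq] at h
        simp only [hX, mul_one]
        exact le_max_of_le_left (by linarith)
      · rw [Set.indicator_of_notMem h, mul_zero]
        exact le_max_right _ _
    have h1 : k * E (({ω | ξ ω ≤ -k} : Set Ω).indicator fun _ => (1 : ℝ)) ≤ E X := by
      rw [← hpos k _ hk0]
      exact hmono _ _ hptw
    have h2 := hge1 (-k)
    have : k ≤ E X := le_trans (by nlinarith) h1
    have hEX : E X ≤ |E X| := le_abs_self _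
    linarith [hk ▸ this]
  set c : ℝ := sInf T with hc
  -- above c: null
  have habove : ∀ α : ℝ, c < α →
      E ((({ω | α < ξ ω}) : Set Ω).indicator fun _ => (1 : ℝ)) = 0 := by
    intro α hα
    obtain ⟨t, htT, htα⟩ := exists_lt_of_csInf_lt Tne hα
    exact Tmono t α htT htα.le
  -- below c: complement null
  have hbelow : ∀ α : ℝ, α < c →
      E ((({ω | ξ ω ≤ α}) : Set Ω).indicator fun _ => (1 : ℝ)) = 0 := by
    intro α hα
    rcases dichGT α with h | h
    · exact absurd (csInf_le Tbdd h) (not_le.mpr hα)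
    · exact h
  -- no mass strictly above c
  have hgt : E ((({ω | c < ξ ω}) : Set Ω).indicator fun _ => (1 : ℝ)) = 0 := by
    rcases dichGT c with h | h
    · exact h
    exfalso
    -- h : E[1_{ξ ≤ c}] = 0 ; mass concentrates just above c
    set X : Ω → ℝ := fun ω => if c < ξ ω then (ξ ω - c)⁻¹ else 0 with hX
    set k : ℝ := |E X| + 1 with hk
    have hk1 : (1 : ℝ) ≤ k := by
      have := abs_nonneg (E X); linarith
    have hk0 : (0 : ℝ) < k := lt_of_lt_of_le one_pos hk1
    set S : Set Ω := {ω | c < ξ ω ∧ ξ ω ≤ c + k⁻¹} with hS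
    have hptw : ∀ ω, k * (S.indicator (fun _ => (1 : ℝ)) ω) ≤ X ω := by
      intro ω
      by_cases hω : ω ∈ S
      · rw [Set.indicator_of_mem hω, mul_one]
        obtain ⟨h1, h2⟩ := hω
        have hpos' : (0 : ℝ) < ξ ω - c := by linarith
        have : ξ ω - c ≤ k⁻¹ := by linarith
        have : (k⁻¹)⁻¹ ≤ (ξ ω - c)⁻¹ := by
          apply inv_anti₀ hpos' this
        rw [inv_inv] at this
        simpa [hX, if_pos h1] using this
      · rw [Set.indicator_of_notMem hω, mul_zero]
        simp only [hX]
        split_ifs with hgt'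
        · exact inv_nonneg.mpr (by linarith)
        · exact le_rfl
    have h1' : k * E (S.indicator fun _ => (1 : ℝ)) ≤ E X := by
      rw [← hpos k _ hk0.le]
      exact hmono _ _ hptw
    have hScnull : E (Sᶜ.indicator fun _ => (1 : ℝ)) = 0 := by
      have hsub' : Sᶜ ⊆ {ω | ξ ω ≤ c} ∪ {ω | c + k⁻¹ < ξ ω} := by
        intro ω hω
        simp only [hS, Set.mem_compl_iff, Set.mem_setOf_eq, not_and, not_le] at hω
        by_cases h1 : c < ξ ω
        · right; exact hω h1
        · left; exact not_lt.mp h1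
      have hle := (Imono _ _ hsub').trans (Iunion _ _)
      have hu : E ((({ω | c + k⁻¹ < ξ ω}) : Set Ω).indicator fun _ => (1 : ℝ)) = 0 :=
        habove _ (by linarith [inv_pos.mpr hk0])
      have := Inonneg Sᶜ
      rw [h, hu] at hle
      linarith
    have h2' : (1 : ℝ) ≤ E (S.indicator fun _ => (1 : ℝ)) := Ige _ hScnull
    have : k ≤ E X := le_trans (by nlinarith) h1'
    have hEX : E X ≤ |E X| := le_abs_self _
    linarith [hk ▸ this]
  -- no mass strictly below c
  have hlt : E ((({ω | ξ ω < c}) : Set Ω).indicator fun _ => (1 : ℝ)) = 0 := by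
    rcases dichGE c with h | h
    swap
    · exact h
    exfalso
    -- h : E[1_{c ≤ ξ}] = 0 ; mass concentrates just below c
    set X : Ω → ℝ := fun ω => if ξ ω < c then (c - ξ ω)⁻¹ else 0 with hX
    set k : ℝ := |E X| + 1 with hk
    have hk1 : (1 : ℝ) ≤ k := by
      have := abs_nonneg (E X); linarith
    have hk0 : (0 : ℝ) < k := lt_of_lt_of_le one_pos hk1
    set S : Set Ω := {ω | c - k⁻¹ ≤ ξ ω ∧ ξ ω < c} with hS
    have hptw : ∀ ω, k * (S.indicator (fun _ => (1 : ℝ)) ω) ≤ X ω := by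
      intro ω
      by_cases hω : ω ∈ S
      · rw [Set.indicator_of_mem hω, mul_one]
        obtain ⟨h1, h2⟩ := hω
        have hpos' : (0 : ℝ) < c - ξ ω := by linarith
        have : c - ξ ω ≤ k⁻¹ := by linarith
        have : (k⁻¹)⁻¹ ≤ (c - ξ ω)⁻¹ := by
          apply inv_anti₀ hpos' this
        rw [inv_inv] at this
        simpa [hX, if_pos h2] using this
      · rw [Set.indicator_of_notMem hω, mul_zero]
        simp only [hX]
        split_ifs with hgt'
        · exact inv_nonneg.mpr (by linarith)
        · exact le_rfl
    have h1' : k * E (S.indicator fun _ => (1 : ℝ)) ≤ E X := by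
      rw [← hpos k _ hk0.le]
      exact hmono _ _ hptw
    have hScnull : E (Sᶜ.indicator fun _ => (1 : ℝ)) = 0 := by
      have hkinv : (0:ℝ) < k⁻¹ := inv_pos.mpr hk0
      have hsub' : Sᶜ ⊆ {ω | ξ ω ≤ c - k⁻¹} ∪ {ω | c ≤ ξ ω} := by
        intro ω hω
        simp only [hS, Set.mem_compl_iff, Set.mem_setOf_eq, not_and, not_lt] at hω
        by_cases h1 : ξ ω < c
        · left
          have h3 : ¬ (c - k⁻¹ ≤ ξ ω) := fun h3 => absurd (hω h3) (not_le.mpr h1)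
          push_neg at h3
          exact h3.le
        · right; exact not_lt.mp h1
      have hle := (Imono _ _ hsub').trans (Iunion _ _)
      have hu : E ((({ω | ξ ω ≤ c - k⁻¹}) : Set Ω).indicator fun _ => (1 : ℝ)) = 0 :=
        hbelow _ (by linarith)
      have := Inonneg Sᶜ
      rw [h, hu] at hle
      linarith
    have h2' : (1 : ℝ) ≤ E (S.indicator fun _ => (1 : ℝ)) := Ige _ hScnull
    have : k ≤ E X := le_trans (by nlinarith) h1'
    have hEX : E X ≤ |E X| := le_abs_self _
    linarith [hk ▸ this]
  -- conclude
  refine ⟨c, {ω | ξ ω ≠ c}, ?_, fun ω hω => not_not.mp hω⟩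
  have hsub' : ({ω | ξ ω ≠ c} : Set Ω) ⊆ {ω | ξ ω < c} ∪ {ω | c < ξ ω} := by
    intro ω hω
    rcases lt_or_gt_of_ne hω with h | h
    · left; exact h
    · right; exact h
  have hle := (Imono _ _ hsub').trans (Iunion _ _)
  rw [hlt, hgt] at hle
  exact le_antisymm (by linarith) (Inonneg _)
end

section
/- (Maximal ergodic lemma for sublinear expectations) Let E be a sublinear expectation preserved by θ̂, ξ ∈ L¹(Ω), S₀ = 0, S_k(ω) = Σ_{j=0}^{k-1} ξ(θ̂^j ω) for k ≥ 1, and M_k(ω) = max_{0≤j≤k} S_j(ω). Then for every k ≥ 1, E[ξ · 1_{{M_k > 0}}] ≥ 0. -/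
open Set

/-- Maximal ergodic lemma for sublinear expectations:
with `S_k(ω) = Σ_{j<k} ξ(θ̂ʲω)` and `M_k = max_{0≤j≤k} S_j`, for every `k ≥ 1`
one has `E[ξ · 1_{{M_k > 0}}] ≥ 0`. -/
theorem maximal_ergodic_lemma {Ω : Type*} [MeasurableSpace Ω]
    (E : (Ω → ℝ) → ℝ)
    (hmono : ∀ X Y : Ω → ℝ, (∀ ω, Y ω ≤ X ω) → E Y ≤ E X)
    (hconst : ∀ c : ℝ, E (fun _ => c) = c)
    (hsub : ∀ X Y : Ω → ℝ, E (X + Y) ≤ E X + E Y)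
    (hpos : ∀ (l : ℝ) (X : Ω → ℝ), 0 ≤ l → E (fun ω => l * X ω) = l * E X)
    (θ : Ω → Ω) (hθ : Measurable θ)
    (hpres : ∀ X : Ω → ℝ, E (X ∘ θ) = E X)
    (ξ : Ω → ℝ) (hξ : Measurable ξ)
    (S : ℕ → Ω → ℝ) (hS : ∀ k ω, S k ω = ∑ j ∈ Finset.range k, ξ (θ^[j] ω))
    (M : ℕ → Ω → ℝ)
    (hM : ∀ k ω, M k ω = (Finset.range (k + 1)).sup'
      (Finset.nonempty_range_iff.mpr (Nat.succ_ne_zero k)) (fun j => S j ω)) :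
    ∀ k : ℕ, 1 ≤ k → 0 ≤ E ({ω | 0 < M k ω}.indicator ξ) := by
  intro k _
  -- S (j+1) ω = ξ ω + S j (θ ω)
  have hstep : ∀ (j : ℕ) (ω : Ω), S (j + 1) ω = ξ ω + S j (θ ω) := by
    intro j ω
    rw [hS, hS, Finset.sum_range_succ']
    simp [Function.iterate_succ_apply, add_comm]
  have hS0 : ∀ ω, S 0 ω = 0 := by intro ω; simp [hS]
  have hSle : ∀ (j : ℕ), j ≤ k → ∀ ω, S j ω ≤ M k ω := by
    intro j hj ω
    rw [hM]
    exact Finset.le_sup' (fun j => S j ω)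
      (Finset.mem_range.mpr (Nat.lt_succ_of_le hj))
  have hM0 : ∀ ω, 0 ≤ M k ω := by
    intro ω
    have := hSle 0 (Nat.zero_le k) ω
    rwa [hS0] at this
  -- pointwise inequality
  have hpt : ∀ ω, M k ω - M k (θ ω) ≤ ({ω | 0 < M k ω}.indicator ξ) ω := by
    intro ω
    by_cases h : 0 < M k ω
    · simp only [Set.indicator_apply, Set.mem_setOf_eq, if_pos h]
      obtain ⟨j, hj, hje⟩ := Finset.exists_mem_eq_sup' (Finset.nonempty_range_iff.mpr
        (Nat.succ_ne_zero k)) (fun j => S j ω)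
      have hjk : j ≤ k := Nat.lt_succ_iff.mp (Finset.mem_range.mp hj)
      have hMj : M k ω = S j ω := by rw [hM]; exact hje
      rcases j with _ | i
      · rw [hMj, hS0] at h; exact absurd h (lt_irrefl 0)
      · have hi : S i (θ ω) ≤ M k (θ ω) := hSle i (le_trans (Nat.le_succ i) hjk) (θ ω)
        have : M k ω = ξ ω + S i (θ ω) := by rw [hMj, hstep]
        linarith
    · simp only [Set.indicator_apply, Set.mem_setOf_eq, if_neg h]
      have h0 : M k ω = 0 := le_antisymm (not_lt.mp h) (hM0 ω)
      have := hM0 (θ ω)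
      linarith
  have h1 : E (fun ω => M k ω - M k (θ ω)) ≤ E ({ω | 0 < M k ω}.indicator ξ) :=
    hmono _ _ hpt
  have h2 : E (M k) ≤ E (fun ω => M k ω - M k (θ ω)) + E (M k ∘ θ) := by
    have := hsub (fun ω => M k ω - M k (θ ω)) (M k ∘ θ)
    have heq : (fun ω => M k ω - M k (θ ω)) + (M k ∘ θ) = M k := by
      funext ω; simp [Function.comp]
    rwa [heq] at this
  rw [hpres (M k)] at h2
  linarith
end
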